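/- arXiv:1211.2662 — 2 statements merged into one kernel-verified Lean document; each statement's English description precedes it below -/
import Mathlib

section
/- A pair (a,c) is implied by a non-trivial strongly connected component of H+ (i.e., (a,c) does not lie in a non-trivial component but some vertex of a non-trivial component has an arc to (a,c)) if and only if H contains an induced path a, b, c, d, e on five vertices such that the neighborhood of a is strictly contained in the neighborhood of c. Moreover, in that case the non-trivial component implying (a,c) contains the pairs (a,d), (a,e), (b,d), (b,e). -/
variable {V : Type*}

/-- Arc of the pair-digraph H⁺: from (u,v) to (u',v) when u,v have the same color,
uu' is an edge and vu' is a non-edge; from (u,v) to (u,v') when u,v have different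
colors, vv' is an edge and uv is a non-edge.  Vertices of H⁺ are pairs of distinct
vertices of H. -/
def PDArc (G : SimpleGraph V) (c : V → Bool) (p q : V × V) : Prop :=
  p.1 ≠ p.2 ∧ q.1 ≠ q.2 ∧
    ((c p.1 = c p.2 ∧ q.2 = p.2 ∧ G.Adj p.1 q.1 ∧ ¬ G.Adj p.2 q.1) ∨
     (c p.1 ≠ c p.2 ∧ q.1 = p.1 ∧ G.Adj p.2 q.2 ∧ ¬ G.Adj p.1 p.2))

/-- Reachability by directed paths in the pair-digraph. -/
def PDReach (G : SimpleGraph V) (c : V → Bool) : V × V → V × V → Prop :=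
  Relation.ReflTransGen (PDArc G c)

/-- `S` is a strongly connected component of the pair-digraph. -/
def PDSCC (G : SimpleGraph V) (c : V → Bool) (S : Set (V × V)) : Prop :=
  S.Nonempty ∧ ∀ p ∈ S, ∀ q, q ∈ S ↔ (PDReach G c p q ∧ PDReach G c q p)

/-- A non-trivial strongly connected component (more than one vertex). -/
def PDSCCNontriv (G : SimpleGraph V) (c : V → Bool) (S : Set (V × V)) : Prop :=
  PDSCC G c S ∧ ∃ p ∈ S, ∃ q ∈ S, p ≠ q

/-- The coupled set S' = {(u,v) : (v,u) ∈ S}. -/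
def PDCoupled (S : Set (V × V)) : Set (V × V) := {p | (p.2, p.1) ∈ S}

/-- A linear ordering avoids the forbidden patterns: there are no a < b < x with
a, b in the same color class, x in the opposite one, ax an edge and bx a non-edge. -/
def GoodOrder (G : SimpleGraph V) (c : V → Bool) (r : LinearOrder V) : Prop :=
  ∀ a b x : V, r.lt a b → r.lt b x → c a = c b → c a ≠ c x → G.Adj a x → G.Adj b x

/-- `ab` and `xy` are independent edges: the four vertices are distinct and induce
exactly the two edges `ab` and `xy`. -/
def IndepEdges (G : SimpleGraph V) (a b x y : V) : Prop :=
  a ≠ b ∧ a ≠ x ∧ a ≠ y ∧ b ≠ x ∧ b ≠ y ∧ x ≠ y ∧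
    G.Adj a b ∧ G.Adj x y ∧ ¬ G.Adj a x ∧ ¬ G.Adj a y ∧ ¬ G.Adj b x ∧ ¬ G.Adj b y

/-- a, b, x, y, z form an induced path on five distinct vertices. -/
def InducedPath5 (G : SimpleGraph V) (a b x y z : V) : Prop :=
  a ≠ b ∧ a ≠ x ∧ a ≠ y ∧ a ≠ z ∧ b ≠ x ∧ b ≠ y ∧ b ≠ z ∧ x ≠ y ∧ x ≠ z ∧ y ≠ z ∧
    G.Adj a b ∧ G.Adj b x ∧ G.Adj x y ∧ G.Adj y z ∧
    ¬ G.Adj a x ∧ ¬ G.Adj a y ∧ ¬ G.Adj a z ∧ ¬ G.Adj b y ∧ ¬ G.Adj b z ∧ ¬ G.Adj x z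

/-!
Two edges `ab`, `yz` of `H` with no edge `ay`, `bz` and with `a`, `z` of the same colour close
the 4-cycle `(a,y) → (a,z) → (b,z) → (b,y) → (a,y)` in `H⁺`; on the other hand a pair `(a,x)`
with `a`, `x` of the same colour and `N(a) ⊆ N(x)` has no out-arcs at all.

Let `p` in a non-trivial component have an arc to a pair `(a,x)` lying in no non-trivial
component. Avoiding 4-cycles through `(a,x)` forces `p = (a,v)` with `v ∈ N(x) \ N(a)` and then
`N(a) ⊆ N(x)`. Following the closed walk of the component through `p` for two steps gives
`(a,v) → (a,w) → (u,w)`, and `a, u, x, v, w` is the induced path.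
-/

variable {G : SimpleGraph V} {c : V → Bool}

lemma Bool.eq_of_ne_of_ne {p q r : Bool} (hpq : p ≠ q) (hqr : q ≠ r) : p = r := by
  cases p <;> cases q <;> cases r <;> simp_all

lemma color_eq_of_adj_of_adj (hbip : ∀ u v : V, G.Adj u v → c u ≠ c v) {u v w : V}
    (huv : G.Adj u v) (hvw : G.Adj v w) : c u = c w :=
  Bool.eq_of_ne_of_ne (hbip u v huv) (hbip v w hvw)

lemma inducedPath5_of_adj (hbip : ∀ u v : V, G.Adj u v → c u ≠ c v) {a b x y z : V}
    (hab : G.Adj a b) (hbx : G.Adj b x) (hxy : G.Adj x y) (hyz : G.Adj y z) (hax : a ≠ x)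
    (hay : ¬ G.Adj a y) (hbz : ¬ G.Adj b z) : InducedPath5 G a b x y z := by
  have hcax := color_eq_of_adj_of_adj hbip hab hbx
  have hcby := color_eq_of_adj_of_adj hbip hbx hxy
  have hcxz := color_eq_of_adj_of_adj hbip hxy hyz
  have hcab := hbip a b hab
  have hcxy := hbip x y hxy
  unfold InducedPath5
  grind [SimpleGraph.adj_symm, SimpleGraph.irrefl]

lemma pdArc_fst {u v u' : V} (huv : u ≠ v) (hu'v : u' ≠ v) (hc : c u = c v)
    (h : G.Adj u u') (h' : ¬ G.Adj v u') : PDArc G c (u, v) (u', v) :=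
  ⟨huv, hu'v, Or.inl ⟨hc, rfl, h, h'⟩⟩

lemma pdArc_snd {u v v' : V} (huv : u ≠ v) (huv' : u ≠ v') (hc : c u ≠ c v)
    (h : G.Adj v v') (h' : ¬ G.Adj u v) : PDArc G c (u, v) (u, v') :=
  ⟨huv, huv', Or.inr ⟨hc, rfl, h, h'⟩⟩

lemma exists_of_pdArc_of_color_eq {u v : V} {q : V × V} (hc : c u = c v)
    (h : PDArc G c (u, v) q) : ∃ u', q = (u', v) ∧ G.Adj u u' ∧ ¬ G.Adj v u' := by
  obtain ⟨-, -, ⟨-, h2, hadj, hnadj⟩ | ⟨hc', -⟩⟩ := h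
  · exact ⟨q.1, Prod.ext rfl h2, hadj, hnadj⟩
  · exact absurd hc hc'

lemma exists_of_pdArc_of_color_ne {u v : V} {q : V × V} (hc : c u ≠ c v)
    (h : PDArc G c (u, v) q) : ∃ v', q = (u, v') ∧ G.Adj v v' := by
  obtain ⟨-, -, ⟨hc', -⟩ | ⟨-, h1, hadj, -⟩⟩ := h
  · exact absurd hc' hc
  · exact ⟨q.2, Prod.ext h1 rfl, hadj⟩

variable (G c) in
def pdComponent (p : V × V) : Set (V × V) :=
  {q | PDReach G c p q ∧ PDReach G c q p}

lemma mem_pdComponent_self (p : V × V) : p ∈ pdComponent G c p :=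
  ⟨.refl, .refl⟩

lemma pdSCCNontriv_pdComponent {p q : V × V} (hpq : PDReach G c p q)
    (hqp : PDReach G c q p) (hne : p ≠ q) : PDSCCNontriv G c (pdComponent G c p) := by
  refine ⟨⟨⟨p, mem_pdComponent_self p⟩, ?_⟩, p, mem_pdComponent_self p, q, ⟨hpq, hqp⟩, hne⟩
  rintro r ⟨hpr, hrp⟩ s
  exact ⟨fun hs => ⟨hrp.trans hs.1, hs.2.trans hpr⟩, fun hs => ⟨hpr.trans hs.1, hs.2.trans hrp⟩⟩

namespace PDSCCNontriv

variable {S : Set (V × V)} {p : V × V}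

lemma exists_ne_reach (hS : PDSCCNontriv G c S) (hp : p ∈ S) :
    ∃ q, q ≠ p ∧ PDReach G c p q ∧ PDReach G c q p := by
  obtain ⟨⟨-, hmem⟩, q₁, hq₁, q₂, hq₂, hne⟩ := hS
  obtain ⟨q, hq, hqp⟩ : ∃ q ∈ S, q ≠ p := by
    by_cases h : q₁ = p
    · exact ⟨q₂, hq₂, fun e => hne (h.trans e.symm)⟩
    · exact ⟨q₁, hq₁, h⟩
  exact ⟨q, hqp, (hmem p hp q).mp hq⟩

lemma exists_pdArc_from (hS : PDSCCNontriv G c S) (hp : p ∈ S) :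
    ∃ r, PDArc G c p r ∧ PDReach G c r p := by
  obtain ⟨q, hqp, hpq, hqp'⟩ := hS.exists_ne_reach hp
  rcases hpq.cases_head with h | ⟨r, hr, hrq⟩
  · exact absurd h.symm hqp
  · exact ⟨r, hr, hrq.trans hqp'⟩

lemma exists_pdArc_to (hS : PDSCCNontriv G c S) (hp : p ∈ S) : ∃ s, PDArc G c s p := by
  obtain ⟨q, hqp, -, hqp'⟩ := hS.exists_ne_reach hp
  rcases hqp'.cases_tail with h | ⟨s, -, hs⟩
  · exact absurd h.symm hqp
  · exact ⟨s, hs⟩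

lemma not_mem_of_neighborSet_subset (hS : PDSCCNontriv G c S) {a x : V} (hc : c a = c x)
    (hsub : G.neighborSet a ⊆ G.neighborSet x) : (a, x) ∉ S := by
  intro hmem
  obtain ⟨q, hq, -⟩ := hS.exists_pdArc_from hmem
  obtain ⟨u, -, hau, hxu⟩ := exists_of_pdArc_of_color_eq hc hq
  exact hxu (hsub hau)

end PDSCCNontriv

lemma exists_pdSCCNontriv_of_adj_of_adj (hbip : ∀ u v : V, G.Adj u v → c u ≠ c v)
    {a b y z : V} (hab : G.Adj a b) (hyz : G.Adj y z) (hay : ¬ G.Adj a y)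
    (hbz : ¬ G.Adj b z) (hcay : c a ≠ c y) :
    ∃ S, PDSCCNontriv G c S ∧ (a, y) ∈ S ∧ (a, z) ∈ S ∧ (b, y) ∈ S ∧ (b, z) ∈ S := by
  have hcaz : c a = c z := Bool.eq_of_ne_of_ne hcay (hbip y z hyz)
  have hcby : c b = c y := Bool.eq_of_ne_of_ne (hbip b a hab.symm) hcay
  have hcbz : c b ≠ c z := fun h => hbip a b hab (hcaz.trans h.symm)
  have hne_ay : a ≠ y := fun h => hcay (congrArg c h)
  have hne_az : a ≠ z := by rintro rfl; exact hay hyz.symm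
  have hne_by : b ≠ y := by rintro rfl; exact hay hab
  have hne_bz : b ≠ z := fun h => hcbz (congrArg c h)
  have h₁ := pdArc_snd hne_ay hne_az hcay hyz hay
  have h₂ := pdArc_fst hne_az hne_bz hcaz hab (fun h => hbz h.symm)
  have h₃ := pdArc_snd hne_bz hne_by hcbz hyz.symm hbz
  have h₄ := pdArc_fst hne_by hne_ay hcby hab.symm (fun h => hay h.symm)
  have hback : PDReach G c (a, z) (a, y) := .head h₂ (.head h₃ (.single h₄))
  refine ⟨pdComponent G c (a, y), pdSCCNontriv_pdComponent (.single h₁) hback ?_,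
    mem_pdComponent_self _, ⟨.single h₁, hback⟩, ⟨.head h₁ (.head h₂ (.single h₃)), .single h₄⟩,
    ⟨.head h₁ (.single h₂), .head h₃ (.single h₄)⟩⟩
  exact fun h => hyz.ne (congrArg Prod.snd h)

lemma exists_pdSCCNontriv_of_inducedPath5 (hbip : ∀ u v : V, G.Adj u v → c u ≠ c v)
    {a b x y z : V} (h : InducedPath5 G a b x y z) :
    ∃ S, PDSCCNontriv G c S ∧ (∃ p ∈ S, PDArc G c p (a, x)) ∧
      (a, y) ∈ S ∧ (a, z) ∈ S ∧ (b, y) ∈ S ∧ (b, z) ∈ S := by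
  obtain ⟨-, hax, hay, -, -, -, -, -, -, -, hab, hbx, hxy, hyz, -, hnay, -, -, hnbz, -⟩ := h
  have hcay : c a ≠ c y := (color_eq_of_adj_of_adj hbip hab hbx).trans_ne (hbip x y hxy)
  obtain ⟨S, hS, hayS, hazS, hbyS, hbzS⟩ :=
    exists_pdSCCNontriv_of_adj_of_adj hbip hab hyz hnay hnbz hcay
  exact ⟨S, hS, ⟨_, hayS, pdArc_snd hay hax hcay hxy.symm hnay⟩, hayS, hazS, hbyS, hbzS⟩

lemma exists_eq_of_pdArc_to_sink (hbip : ∀ u v : V, G.Adj u v → c u ≠ c v) {a x : V}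
    (hsink : ∀ T : Set (V × V), PDSCCNontriv G c T → (a, x) ∉ T) {S : Set (V × V)} (hS : PDSCCNontriv G c S) {p : V × V}
    (hp : p ∈ S) (harc : PDArc G c p (a, x)) :
    ∃ v, p = (a, v) ∧ c a ≠ c v ∧ G.Adj v x ∧ ¬ G.Adj a v := by
  obtain ⟨p₁, p₂⟩ := p
  obtain ⟨-, -, ⟨hc, rfl, hua, hxa⟩ | ⟨hc, rfl, hvx, hav⟩⟩ := harc
  · have hcax : c a ≠ c x := fun h => hbip p₁ a hua (hc.trans h.symm)
    obtain ⟨⟨s₁, s₂⟩, hs⟩ := hS.exists_pdArc_to hp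
    obtain ⟨-, -, ⟨hc', rfl, hsu, -⟩ | ⟨-, rfl, hvx, huv⟩⟩ := hs
    · exact absurd (hc'.trans hc.symm) (hbip s₁ p₁ hsu)
    · obtain ⟨T, hT, hmem, -⟩ := exists_pdSCCNontriv_of_adj_of_adj hbip hua.symm hvx.symm
        (fun h => hxa h.symm) huv hcax
      exact absurd hmem (hsink T hT)
  · exact ⟨p₂, rfl, hc, hvx, hav⟩

lemma neighborSet_subset_of_pdArc_to_sink (hbip : ∀ u v : V, G.Adj u v → c u ≠ c v) {a x : V}
    (hsink : ∀ T : Set (V × V), PDSCCNontriv G c T → (a, x) ∉ T) {v : V} (hc : c a ≠ c v)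
    (hvx : G.Adj v x) (hav : ¬ G.Adj a v) : G.neighborSet a ⊆ G.neighborSet x := by
  intro u hau
  by_contra hxu
  obtain ⟨T, hT, -, hmem, -⟩ :=
    exists_pdSCCNontriv_of_adj_of_adj hbip hau hvx hav (fun h => hxu h.symm) hc
  exact hsink T hT hmem

lemma exists_inducedPath5_of_pdArc_to_sink (hbip : ∀ u v : V, G.Adj u v → c u ≠ c v)
    {a x : V} (hsink : ∀ T : Set (V × V), PDSCCNontriv G c T → (a, x) ∉ T)
    {S : Set (V × V)} (hS : PDSCCNontriv G c S) {p : V × V} (hp : p ∈ S)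
    (harc : PDArc G c p (a, x)) :
    ∃ b y z, InducedPath5 G a b x y z ∧ G.neighborSet a ⊂ G.neighborSet x := by
  have hax : a ≠ x := harc.2.1
  obtain ⟨v, rfl, hcav, hvx, hav⟩ := exists_eq_of_pdArc_to_sink hbip hsink hS hp harc
  have hsub := neighborSet_subset_of_pdArc_to_sink hbip hsink hcav hvx hav
  obtain ⟨r, har, hra⟩ := hS.exists_pdArc_from hp
  obtain ⟨w, rfl, hvw⟩ := exists_of_pdArc_of_color_ne hcav har
  obtain ⟨q, hq⟩ : ∃ q, PDArc G c (a, w) q := by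
    rcases hra.cases_head with h | ⟨q, hq, -⟩
    · exact absurd (congrArg Prod.snd h).symm hvw.ne
    · exact ⟨q, hq⟩
  have hcaw : c a = c w := Bool.eq_of_ne_of_ne hcav (hbip v w hvw)
  obtain ⟨u, -, hau, hwu⟩ := exists_of_pdArc_of_color_eq hcaw hq
  exact ⟨u, v, w, inducedPath5_of_adj hbip hau (hsub hau).symm hvx.symm hvw hax hav
    (fun h => hwu h.symm), hsub, fun h => hav (h hvx.symm)⟩

/-- (a,x) is implied by a non-trivial component iff H has an induced path
a, b, x, y, z with N(a) ⊊ N(x); and any such path gives a non-trivial component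
implying (a,x) and containing (a,y), (a,z), (b,y), (b,z). -/
theorem stmt10 (G : SimpleGraph V) (c : V → Bool)
    (hbip : ∀ x y : V, G.Adj x y → c x ≠ c y)
    (a x : V) :
    ((∃ S : Set (V × V), PDSCCNontriv G c S ∧
        (∀ T : Set (V × V), PDSCCNontriv G c T → (a, x) ∉ T) ∧
        ∃ p ∈ S, PDArc G c p (a, x)) ↔
      (∃ b y z : V, InducedPath5 G a b x y z ∧
        G.neighborSet a ⊂ G.neighborSet x)) ∧
    (∀ b y z : V, InducedPath5 G a b x y z → G.neighborSet a ⊂ G.neighborSet x →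
      ∃ S : Set (V × V), PDSCCNontriv G c S ∧ (∃ p ∈ S, PDArc G c p (a, x)) ∧
        (a, y) ∈ S ∧ (a, z) ∈ S ∧ (b, y) ∈ S ∧ (b, z) ∈ S) := by
  refine ⟨⟨?_, ?_⟩, fun b y z h _ => exists_pdSCCNontriv_of_inducedPath5 hbip h⟩
  · rintro ⟨S, hS, hsink, p, hp, harc⟩
    exact exists_inducedPath5_of_pdArc_to_sink hbip hsink hS hp harc
  · rintro ⟨b, y, z, h, hss⟩
    obtain ⟨S, hS, harc, -⟩ := exists_pdSCCNontriv_of_inducedPath5 hbip h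
    obtain ⟨-, -, -, -, -, -, -, -, -, -, hab, hbx, -⟩ := h
    have hcax : c a = c x := color_eq_of_adj_of_adj hbip hab hbx
    exact ⟨S, hS, fun T hT => hT.not_mem_of_neighborSet_subset hcax hss.subset, harc⟩
end

section
/- If there is an arc in H+ from a vertex of a non-trivial strongly connected component S to a vertex w not in S, then w has out-degree zero in H+; if there is an arc from a vertex w not in S to a vertex of S, then w has in-degree zero in H+. -/
variable {V : Type*}

/-!
Arcs of H⁺ alternate between monochromatic and bichromatic pairs, and every directed path
`(u,v) → (u,w) → (q,w)` through a monochromatic pair closes into the directed 4-cycle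
`(q,w) → (q,v) → (u,v)`. Let `p ∈ S` and `p → w` with `w ∉ S`. If `p` is monochromatic,
composing an arc `r → p` (which exists as `S` is non-trivial) with `p → w` gives a path
from `w` back to `p`; if `p` is bichromatic, then `w` is monochromatic and any arc `w → q`
gives a path `w → q → ⋯ → p`. Either way `w ∈ S`, a contradiction. Arcs into `S` are dual.
-/

variable {G : SimpleGraph V} {c : V → Bool}

theorem PDArc.color_eq_of_color_ne (hbip : ∀ x y : V, G.Adj x y → c x ≠ c y)
    {p q : V × V} (h : PDArc G c p q) (hp : c p.1 ≠ c p.2) : c q.1 = c q.2 := by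
  obtain ⟨p1, p2⟩ := p
  obtain ⟨q1, q2⟩ := q
  rcases h with ⟨-, -, ⟨hpc, -⟩ | ⟨-, rfl, hadj, -⟩⟩
  · exact absurd hpc hp
  · exact (Bool.eq_not_iff.2 hp).trans (Bool.eq_not_iff.2 (hbip p2 q2 hadj).symm).symm

theorem PDArc.exists_square (hbip : ∀ x y : V, G.Adj x y → c x ≠ c y)
    {x y z : V × V} (hxy : PDArc G c x y) (hyz : PDArc G c y z) (hy : c y.1 = c y.2) :
    ∃ t, PDArc G c z t ∧ PDArc G c t x := by
  obtain ⟨x1, x2⟩ := x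
  obtain ⟨y1, y2⟩ := y
  obtain ⟨z1, z2⟩ := z
  rcases hxy with ⟨-, -, ⟨hcx, hy2, hxy1, -⟩ | ⟨hcx, hy1, hx2y2, hnx⟩⟩
  · obtain rfl : x2 = y2 := hy2.symm
    exact absurd (hcx.trans hy.symm) (hbip x1 y1 hxy1)
  obtain rfl : x1 = y1 := hy1.symm
  rcases hyz with ⟨-, hz, ⟨-, hz2, hx1z1, hny2z1⟩ | ⟨hcy, -⟩⟩
  · obtain rfl : y2 = z2 := hz2.symm
    have hz1x2 : z1 ≠ x2 := by rintro rfl; exact hnx hx1z1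
    have hcz1 : c z1 ≠ c y2 := hy ▸ (hbip x1 z1 hx1z1).symm
    have hcz1x2 : c z1 = c x2 :=
      (Bool.eq_not_iff.2 (hy ▸ hcz1)).trans (Bool.eq_not_iff.2 hcx.symm).symm
    refine ⟨(z1, x2), ⟨hz, hz1x2, Or.inr ⟨hcz1, rfl, hx2y2.symm, fun h => hny2z1 h.symm⟩⟩,
      ⟨hz1x2, ne_of_apply_ne c hcx, Or.inl ⟨hcz1x2, rfl, hx1z1.symm, fun h => hnx h.symm⟩⟩⟩
  · exact absurd hy hcy

theorem PDSCC.mem_of_reach {S : Set (V × V)} (hS : PDSCC G c S) {p q : V × V} (hp : p ∈ S)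
    (hpq : PDReach G c p q) (hqp : PDReach G c q p) : q ∈ S :=
  (hS.2 p hp q).2 ⟨hpq, hqp⟩

theorem PDSCCNontriv.exists_ne {S : Set (V × V)} (hS : PDSCCNontriv G c S) (p : V × V) :
    ∃ s ∈ S, s ≠ p := by
  obtain ⟨-, a, ha, b, hb, hab⟩ := hS
  by_cases h : a = p
  · exact ⟨b, hb, h ▸ hab.symm⟩
  · exact ⟨a, ha, h⟩

theorem PDSCCNontriv.exists_arc_to {S : Set (V × V)} (hS : PDSCCNontriv G c S) {p : V × V}
    (hp : p ∈ S) : ∃ r, PDArc G c r p := by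
  obtain ⟨s, hs, hsp⟩ := hS.exists_ne p
  rcases ((hS.1.2 p hp s).1 hs).2.cases_tail with h | ⟨r, -, hrp⟩
  · exact absurd h.symm hsp
  · exact ⟨r, hrp⟩

theorem PDSCCNontriv.exists_arc_from {S : Set (V × V)} (hS : PDSCCNontriv G c S) {p : V × V}
    (hp : p ∈ S) : ∃ r, PDArc G c p r := by
  obtain ⟨s, hs, hsp⟩ := hS.exists_ne p
  rcases ((hS.1.2 p hp s).1 hs).1.cases_head with h | ⟨r, hpr, -⟩
  · exact absurd h hsp.symm
  · exact ⟨r, hpr⟩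

open Relation.ReflTransGen in
/-- An arc leaving a non-trivial component S goes to a sink of H⁺, and an arc
entering S comes from a source of H⁺. -/
theorem stmt11 (G : SimpleGraph V) (c : V → Bool)
    (hbip : ∀ x y : V, G.Adj x y → c x ≠ c y)
    (S : Set (V × V)) (hS : PDSCCNontriv G c S)
    (w : V × V) (hw : w ∉ S) :
    ((∃ p ∈ S, PDArc G c p w) → ∀ q : V × V, ¬ PDArc G c w q) ∧
    ((∃ p ∈ S, PDArc G c w p) → ∀ q : V × V, ¬ PDArc G c q w) := by
  constructor
  · rintro ⟨p, hp, hpw⟩ q hwq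
    refine hw (hS.1.mem_of_reach hp (single hpw) ?_)
    by_cases hpc : c p.1 = c p.2
    · obtain ⟨r, hrp⟩ := hS.exists_arc_to hp
      obtain ⟨t, hwt, htr⟩ := hrp.exists_square hbip hpw hpc
      exact head hwt (head htr (single hrp))
    · obtain ⟨t, hqt, htp⟩ := hpw.exists_square hbip hwq (hpw.color_eq_of_color_ne hbip hpc)
      exact head hwq (head hqt (single htp))
  · rintro ⟨p, hp, hwp⟩ q hqw
    refine hw (hS.1.mem_of_reach hp ?_ (single hwp))
    by_cases hwc : c w.1 = c w.2
    · obtain ⟨t, hpt, htq⟩ := hqw.exists_square hbip hwp hwc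
      exact head hpt (head htq (single hqw))
    · obtain ⟨r, hpr⟩ := hS.exists_arc_from hp
      obtain ⟨t, hrt, htw⟩ := hwp.exists_square hbip hpr (hwp.color_eq_of_color_ne hbip hwc)
      exact head hpr (head hrt (single htw))
end
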